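/- arXiv:1503.08572 — 7 statements merged into one kernel-verified Lean document; each statement's English description precedes it below -/
import Mathlib

section
/- Let T ⊆ ℤ be a set that contains arbitrarily long (≤m)-progressions (i.e., for every r ∈ ℕ there exist u₁ < u₂ < ... < u_r in T with 1 ≤ u_{i+1} - u_i ≤ m for all i). If T = T₁ ∪ ... ∪ T_k is a partition of T into finitely many sets, then there exists an index i ≤ k and an m' ∈ ℕ such that T_i contains arbitrarily long (≤m')-progressions. -/
/-- `T` contains arbitrarily long `(≤ m)`-progressions: for every `r : ℕ` there is a
sequence `u 0, …, u (r-1)` of elements of `T` with `1 ≤ u (i+1) - u i ≤ m`. -/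
def HasArbLongProg (T : Set ℤ) (m : ℕ) : Prop :=
  ∀ r : ℕ, ∃ u : ℕ → ℤ, (∀ i < r, u i ∈ T) ∧
    ∀ i, i + 1 < r → 1 ≤ u (i + 1) - u i ∧ u (i + 1) - u i ≤ (m : ℤ)

lemma steps_bound (u : ℕ → ℤ) (m N : ℕ)
    (h : ∀ i, i + 1 < N → 1 ≤ u (i + 1) - u i ∧ u (i + 1) - u i ≤ (m : ℤ)) :
    ∀ a b, a ≤ b → b < N → ((b : ℤ) - a ≤ u b - u a ∧ u b - u a ≤ m * ((b : ℤ) - a)) := by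
  intro a b hab hbN
  induction b, hab using Nat.le_induction with
  | base => simp
  | succ b hab ih =>
    have hb : b < N := Nat.lt_of_succ_lt hbN
    have ih' := ih hb
    have hs := h b hbN
    have hab' : (a : ℤ) ≤ b := by exact_mod_cast hab
    push_cast
    constructor <;> nlinarith [ih'.1, ih'.2, hs.1, hs.2, (Nat.cast_nonneg m : (0:ℤ) ≤ m)]

lemma key_lemma (A B : Set ℤ) (m : ℕ) (h : HasArbLongProg (A ∪ B) m) :
    HasArbLongProg A m ∨ ∃ m', HasArbLongProg B m' := by
  by_cases hA : HasArbLongProg A m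
  · exact Or.inl hA
  right
  simp only [HasArbLongProg, not_forall, not_exists] at hA
  obtain ⟨r₀, hr₀⟩ := hA
  have hr₀1 : 1 ≤ r₀ := by
    rcases Nat.eq_zero_or_pos r₀ with h0 | h
    · exfalso
      exact hr₀ (fun _ => 0)
        ⟨fun i hi => absurd hi (by omega), fun i hi => absurd hi (by omega)⟩
    · exact h
  refine ⟨m * r₀, ?_⟩
  intro r
  set N := (r + 1) * r₀ with hN
  obtain ⟨u, huT, hustep⟩ := h N
  have claim : ∀ p, p + r₀ ≤ N → ∃ q, p ≤ q ∧ q < p + r₀ ∧ u q ∈ B := by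
    intro p hp
    by_contra hc
    push_neg at hc
    apply hr₀ (fun i => u (p + i))
    constructor
    · intro i hi
      have hmem : u (p + i) ∈ A ∪ B := huT (p + i) (by omega)
      have hnb : u (p + i) ∉ B := hc (p + i) (by omega) (by omega)
      rcases hmem with hmem | hmem
      · exact hmem
      · exact absurd hmem hnb
    · intro i hi
      exact hustep (p + i) (by omega)
  have hbase : r₀ ≤ N := by
    have : 1 * r₀ ≤ (r + 1) * r₀ := Nat.mul_le_mul_right _ (by omega)
    simpa using this
  have base := claim 0 (by simpa using hbase)
  let g : ℕ → ℕ := fun t => Nat.rec base.choose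
      (fun _ prev => if hp : prev + 1 + r₀ ≤ N then (claim (prev + 1) hp).choose
        else prev + 1) t
  have hg0 : g 0 = base.choose := rfl
  have hgs : ∀ t, g (t + 1) =
      if hp : g t + 1 + r₀ ≤ N then (claim (g t + 1) hp).choose else g t + 1 :=
    fun t => rfl
  have hbd : ∀ t, t < r → g t < (t + 1) * r₀ ∧ u (g t) ∈ B := by
    intro t
    induction t with
    | zero =>
      intro _
      obtain ⟨h1, h2, h3⟩ := base.choose_spec
      rw [hg0]
      exact ⟨by simpa using h2, h3⟩
    | succ t ih =>
      intro ht
      have iht := ih (by omega)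
      have hmul1 : (t + 1) * r₀ ≤ r * r₀ := Nat.mul_le_mul_right _ (by omega)
      have hNeq : N = r * r₀ + r₀ := by rw [hN]; ring
      have hguard : g t + 1 + r₀ ≤ N := by omega
      have heq2 : (t + 1 + 1) * r₀ = (t + 1) * r₀ + r₀ := by ring
      rw [hgs t, dif_pos hguard]
      obtain ⟨h1, h2, h3⟩ := (claim (g t + 1) hguard).choose_spec
      exact ⟨by omega, h3⟩
  have hstep : ∀ t, t + 1 < r →
      g t < g (t + 1) ∧ g (t + 1) ≤ g t + r₀ ∧ g (t + 1) < N := by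
    intro t ht
    have iht := (hbd t (by omega)).1
    have hmul1 : (t + 1) * r₀ ≤ r * r₀ := Nat.mul_le_mul_right _ (by omega)
    have hNeq : N = r * r₀ + r₀ := by rw [hN]; ring
    have hguard : g t + 1 + r₀ ≤ N := by omega
    have hbd2 := (hbd (t + 1) ht).1
    have hmul2 : (t + 2) * r₀ ≤ (r + 1) * r₀ := Nat.mul_le_mul_right _ (by omega)
    have hgs' := hgs t
    rw [dif_pos hguard] at hgs'
    obtain ⟨h1, h2, h3⟩ := (claim (g t + 1) hguard).choose_spec
    rw [hgs']
    refine ⟨by omega, by omega, by omega⟩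
  refine ⟨fun t => u (g t), fun i hi => (hbd i hi).2, ?_⟩
  intro i hi
  obtain ⟨hlt, hle, hN'⟩ := hstep i hi
  have hb := steps_bound u m N hustep (g i) (g (i + 1)) (le_of_lt hlt) hN'
  have h1 : (1 : ℤ) ≤ (Nat.cast (g (i + 1)) : ℤ) - (Nat.cast (g i) : ℤ) := by
    have : g i + 1 ≤ g (i + 1) := hlt
    have := (Nat.cast_le (α := ℤ)).mpr this
    push_cast at this
    linarith
  have h2 : (Nat.cast (g (i + 1)) : ℤ) - (Nat.cast (g i) : ℤ) ≤ (r₀ : ℤ) := by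
    have := (Nat.cast_le (α := ℤ)).mpr hle
    push_cast at this
    linarith
  constructor
  · linarith [hb.1]
  · have h3 : (m : ℤ) * ((Nat.cast (g (i + 1)) : ℤ) - (Nat.cast (g i) : ℤ)) ≤ (m : ℤ) * r₀ :=
      mul_le_mul_of_nonneg_left h2 (by positivity)
    push_cast
    linarith [hb.2]

lemma union_lemma : ∀ (k : ℕ) (m : ℕ) (Ti : Fin k → Set ℤ),
    HasArbLongProg (⋃ i, Ti i) m → ∃ i : Fin k, ∃ m' : ℕ, HasArbLongProg (Ti i) m' := by
  intro k
  induction k with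
  | zero =>
    intro m Ti h
    obtain ⟨u, hu, _⟩ := h 1
    have := hu 0 (by omega)
    simp at this
  | succ k ih =>
    intro m Ti h
    have heq : (⋃ i, Ti i) = (⋃ i : Fin k, Ti i.succ) ∪ Ti 0 := by
      ext x
      simp only [Set.mem_iUnion, Set.mem_union]
      constructor
      · rintro ⟨i, hi⟩
        rcases Fin.eq_zero_or_eq_succ i with h0 | ⟨j, rfl⟩
        · right; rwa [h0] at hi
        · left; exact ⟨j, hi⟩
      · rintro (⟨j, hj⟩ | h0)
        · exact ⟨j.succ, hj⟩
        · exact ⟨0, h0⟩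
    rw [heq] at h
    rcases key_lemma _ _ m h with hA | ⟨m', hB⟩
    · obtain ⟨i, m', hi⟩ := ih m (fun i => Ti i.succ) hA
      exact ⟨i.succ, m', hi⟩
    · exact ⟨0, m', hB⟩

theorem stmt_0 (T : Set ℤ) (m : ℕ) (hT : HasArbLongProg T m)
    (k : ℕ) (Ti : Fin k → Set ℤ)
    (hcover : T = ⋃ i, Ti i)
    (hdisj : ∀ i j, i ≠ j → Disjoint (Ti i) (Ti j)) :
    ∃ i : Fin k, ∃ m' : ℕ, HasArbLongProg (Ti i) m' := by
  apply union_lemma k m Ti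
  rwa [← hcover]
end

section
/- Let m ∈ ℕ and let T ⊆ ℤ contain arbitrarily long (≤m)-progressions. Then for every set S ⊂ ℤ of cardinality m+1, there exist x₁, x₂ ∈ S with x₁ ≠ x₂ and y₁, y₂ ∈ T such that x₁ - x₂ = y₁ - y₂. -/
theorem stmt_1 (m : ℕ) (T : Set ℤ) (hT : HasArbLongProg T m)
    (S : Finset ℤ) (hS : S.card = m + 1) :
    ∃ x₁ ∈ S, ∃ x₂ ∈ S, x₁ ≠ x₂ ∧ ∃ y₁ ∈ T, ∃ y₂ ∈ T, x₁ - x₂ = y₁ - y₂ := by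
  classical
  rcases Nat.eq_zero_or_pos m with hm0 | hm
  · obtain ⟨u, _, hstep⟩ := hT 2
    have h := hstep 0 (by norm_num)
    subst hm0
    simp at h
    omega
  have hS0 : S.Nonempty := Finset.card_pos.mp (by omega)
  set a := S.min' hS0 with ha
  set b := S.max' hS0 with hb
  set D := (b - a).toNat with hD
  have hab : a ≤ b := S.min'_le _ (S.max'_mem hS0)
  obtain ⟨u, hmem, hstep⟩ := hT (D + 1)
  have hlow : ∀ j, j < D + 1 → u 0 + j ≤ u j := by
    intro j hj
    induction j with
    | zero => simp
    | succ k ih =>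
      have h1 := hstep k hj
      have h2 := ih (by omega)
      push_cast at h2 ⊢
      omega
  have hex : ∀ s : ℤ, ∃ j, u 0 + (s - a) ≤ u j ∨ (s - a).toNat ≤ j :=
    fun s => ⟨(s - a).toNat, Or.inr le_rfl⟩
  set g : ℤ → ℕ := fun s => Nat.find (hex s) with hg
  have main : ∀ s ∈ S, g s < D + 1 ∧ 0 ≤ u (g s) - (u 0 + (s - a)) ∧
      u (g s) - (u 0 + (s - a)) < m := by
    intro s hs
    have hsa : a ≤ s := S.min'_le s hs
    have hsb : s ≤ b := S.le_max' s hs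
    have htD : ((s - a).toNat : ℤ) = s - a := Int.toNat_of_nonneg (by omega)
    have hDb : ((s - a).toNat) ≤ D := by
      have : ((b - a).toNat : ℤ) = b - a := Int.toNat_of_nonneg (by omega)
      omega
    have gle : g s ≤ (s - a).toNat := Nat.find_le (Or.inr le_rfl)
    have hgr : g s < D + 1 := by omega
    have hAt : u 0 + (s - a) ≤ u (g s) := by
      rcases Nat.find_spec (hex s) with h | h
      · exact h
      · have hgeq : g s = (s - a).toNat := le_antisymm gle h
        have := hlow (g s) hgr
        rw [hgeq] at this ⊢
        omega
    refine ⟨hgr, by omega, ?_⟩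
    rcases Nat.eq_zero_or_pos (g s) with hz | hpos
    · -- then u 0 + (s - a) ≤ u 0, and s - a ≥ 0, so s = a and overshoot is 0
      rw [hz] at hAt ⊢
      omega
    · obtain ⟨k, hk⟩ := Nat.exists_eq_add_of_lt hpos
      have hk' : g s = k + 1 := by omega
      have hmin := Nat.find_min (hex s) (show k < g s by omega)
      push_neg at hmin
      have hstepk := hstep k (by omega)
      rw [hk']
      omega
  have hmaps : ∀ s ∈ S, (u (g s) - (u 0 + (s - a))).toNat ∈ Finset.range m := by
    intro s hs
    obtain ⟨_, h0, hlt⟩ := main s hs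
    simp only [Finset.mem_range]
    omega
  obtain ⟨s, hs, s', hs', hne, heq⟩ :=
    Finset.exists_ne_map_eq_of_card_lt_of_maps_to
      (show (Finset.range m).card < S.card by simp [hS]) hmaps
  obtain ⟨hgr, h0, _⟩ := main s hs
  obtain ⟨hgr', h0', _⟩ := main s' hs'
  have heqZ : u (g s) - (u 0 + (s - a)) = u (g s') - (u 0 + (s' - a)) := by
    have e1 : ((u (g s) - (u 0 + (s - a))).toNat : ℤ) = u (g s) - (u 0 + (s - a)) :=
      Int.toNat_of_nonneg h0
    have e2 : ((u (g s') - (u 0 + (s' - a))).toNat : ℤ) = u (g s') - (u 0 + (s' - a)) :=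
      Int.toNat_of_nonneg h0'
    rw [← e1, ← e2, heq]
  exact ⟨s, hs, s', hs', hne, u (g s), hmem _ hgr, u (g s'), hmem _ hgr', by omega⟩
end

section
/- Let R be a relation on ℤ that is first-order definable over (ℤ;<) with qe-degree q (i.e., R is defined by a quantifier-free formula whose atomic subformulas are of the form x < y + k or x ≤ y + k with |k| ≤ q). Let Φ be a conjunction of atoms R(y₁,...,y_n) over n variables. Then Φ is satisfiable over ℤ if and only if Φ is satisfiable with all variables taking values in the interval {1, ..., (q+1)·n}. -/
/-- Quantifier-free formulas over `(ℤ;<)` with atoms `x_i < x_j + k` and `x_i ≤ x_j + k`. -/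
inductive QF (n : ℕ) : Type
  | lt (i j : Fin n) (k : ℤ) : QF n
  | le (i j : Fin n) (k : ℤ) : QF n
  | and (φ ψ : QF n) : QF n
  | or (φ ψ : QF n) : QF n
  | not (φ : QF n) : QF n

def QF.eval {n : ℕ} : QF n → (Fin n → ℤ) → Prop
  | .lt i j k, v => v i < v j + k
  | .le i j k, v => v i ≤ v j + k
  | .and φ ψ, v => φ.eval v ∧ ψ.eval v
  | .or φ ψ, v => φ.eval v ∨ ψ.eval v
  | .not φ, v => ¬ φ.eval v

/-- All constants in the formula have absolute value at most `q` (qe-degree ≤ q). -/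
def QF.DegLe {n : ℕ} (q : ℕ) : QF n → Prop
  | .lt _ _ k => |k| ≤ (q : ℤ)
  | .le _ _ k => |k| ≤ (q : ℤ)
  | .and φ ψ => φ.DegLe q ∧ ψ.DegLe q
  | .or φ ψ => φ.DegLe q ∧ ψ.DegLe q
  | .not φ => φ.DegLe q

/-!
Sort the values of a solution and shrink every gap longer than `q + 1` down to `q + 1`.
A difference `d ≥ 0` between two values becomes some `d'` with `min (q + 1) d ≤ d' ≤ d`, so every
comparison `x ≤ y + m` with `-(q + 1) ≤ m ≤ q` keeps its truth value, and these are the only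
comparisons that atoms of degree at most `q` can express. After compression the values start at `1`
and are covered by one window of length `q + 1` per variable.
-/

theorem QF.eval_iff_of_le_add_iff {a q : ℕ} {φ : QF a} (hφ : φ.DegLe q) {u u' : Fin a → ℤ}
    (h : ∀ i j (m : ℤ), -(q + 1) ≤ m → m ≤ q → (u i ≤ u j + m ↔ u' i ≤ u' j + m)) :
    φ.eval u ↔ φ.eval u' := by
  induction φ with
  | lt i j k =>
    have hk := abs_le.mp hφ
    have := h i j (k - 1) (by omega) (by omega)
    simp only [QF.eval]
    omega
  | le i j k =>
    have hk := abs_le.mp hφ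
    exact h i j k (by omega) (by omega)
  | and φ ψ ihφ ihψ => simp only [QF.eval, ihφ hφ.1, ihψ hφ.2]
  | or φ ψ ihφ ihψ => simp only [QF.eval, ihφ hφ.1, ihψ hφ.2]
  | not φ ihφ => simp only [QF.eval, ihφ hφ]

namespace GapCompression

open Finset

variable {ι : Type*} [Fintype ι] (B : ℕ) (v : ι → ℤ)

/-- The points that survive compression: the rest of every gap longer than `B` is cut out. -/
noncomputable def covered (x : ℤ) : Finset ℤ :=
  univ.biUnion fun j => Ico (v j) (min (v j + B) x)

noncomputable def compress (i : ι) : ℤ :=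
  1 + #(covered B v (v i))

variable {B v}

theorem mem_covered {x m : ℤ} : m ∈ covered B v x ↔ ∃ j, v j ≤ m ∧ m < v j + B ∧ m < x := by
  simp [covered]

theorem covered_mono {x y : ℤ} (h : x ≤ y) : covered B v x ⊆ covered B v y := by
  intro m hm
  obtain ⟨j, hjm, hmj, hmx⟩ := mem_covered.mp hm
  exact mem_covered.mpr ⟨j, hjm, hmj, hmx.trans_le h⟩

theorem card_covered_le_add {x y : ℤ} (h : x ≤ y) :
    (#(covered B v y) : ℤ) ≤ #(covered B v x) + (y - x) := by
  have hsub : covered B v y ⊆ covered B v x ∪ Ico x y := by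
    intro m hm
    obtain ⟨j, hjm, hmj, hmy⟩ := mem_covered.mp hm
    rcases lt_or_ge m x with hmx | hxm
    · exact mem_union_left _ (mem_covered.mpr ⟨j, hjm, hmj, hmx⟩)
    · exact mem_union_right _ (mem_Ico.mpr ⟨hxm, hmy⟩)
  have hcard := (card_le_card hsub).trans (card_union_le _ _)
  rw [Int.card_Ico] at hcard
  omega

theorem card_covered_add_min_le (i : ι) {y : ℤ} (h : v i ≤ y) :
    (#(covered B v (v i)) : ℤ) + min (B : ℤ) (y - v i) ≤ #(covered B v y) := by
  have hdisj : Disjoint (covered B v (v i)) (Ico (v i) (min (v i + B) y)) := by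
    refine disjoint_left.mpr fun m hm hm' => ?_
    obtain ⟨_, _, _, hmi⟩ := mem_covered.mp hm
    exact (mem_Ico.mp hm').1.not_gt hmi
  have hsub : covered B v (v i) ∪ Ico (v i) (min (v i + B) y) ⊆ covered B v y := by
    refine union_subset (covered_mono h) fun m hm => ?_
    obtain ⟨him, hm⟩ := mem_Ico.mp hm
    exact mem_covered.mpr ⟨i, him, hm.trans_le (min_le_left _ _), hm.trans_le (min_le_right _ _)⟩
  have hcard := card_le_card hsub
  rw [card_union_of_disjoint hdisj, Int.card_Ico] at hcard
  omega

theorem compress_sub_compress_mem_Icc {i j : ι} (h : v i ≤ v j) :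
    compress B v j - compress B v i ∈ Set.Icc (min (B : ℤ) (v j - v i)) (v j - v i) := by
  have hlow := card_covered_add_min_le (B := B) i h
  have hupp := card_covered_le_add (B := B) (v := v) h
  constructor <;> simp only [compress] <;> omega

theorem compress_le_compress_add_iff {i j : ι} {m : ℤ} (hm : -B ≤ m) (hm' : m < B) :
    compress B v i ≤ compress B v j + m ↔ v i ≤ v j + m := by
  rcases le_total (v j) (v i) with h | h <;>
    obtain ⟨_, _⟩ := compress_sub_compress_mem_Icc (B := B) h <;> omega

theorem one_le_compress (i : ι) : 1 ≤ compress B v i := by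
  simp [compress]

/-- The `compress B v i` points of `insert (v i) (covered B v (v i))` all lie in windows
`[v j, v j + B)`. -/
theorem compress_le_mul_card (hB : 0 < B) (i : ι) : compress B v i ≤ B * Fintype.card ι := by
  have hnot : v i ∉ covered B v (v i) := fun h => by
    obtain ⟨_, _, _, hlt⟩ := mem_covered.mp h
    exact lt_irrefl _ hlt
  have hsub : insert (v i) (covered B v (v i)) ⊆ univ.biUnion fun j => Ico (v j) (v j + B) := by
    refine insert_subset (mem_biUnion.mpr ⟨i, mem_univ _, by simp [hB]⟩) fun m hm => ?_
    obtain ⟨j, hjm, hmj, _⟩ := mem_covered.mp hm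
    exact mem_biUnion.mpr ⟨j, mem_univ _, mem_Ico.mpr ⟨hjm, hmj⟩⟩
  have hcard : #(insert (v i) (covered B v (v i))) ≤ B * Fintype.card ι := by
    calc _ ≤ _ := card_le_card hsub
      _ ≤ ∑ j, #(Ico (v j) (v j + B)) := card_biUnion_le
      _ = B * Fintype.card ι := by simp [Int.card_Ico, mul_comm]
  rw [card_insert_of_notMem hnot] at hcard
  rw [compress, add_comm]
  exact_mod_cast hcard

end GapCompression

/-- An instance: a conjunction of constraints `R(y₁,…,y_a)` where `R ⊆ ℤ^a` is defined by a
quantifier-free formula of qe-degree `q` and the `y`'s range over `n` variables. It is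
satisfiable over `ℤ` iff it is satisfiable with values in `{1, …, (q+1)·n}`. -/
theorem stmt_4 (a n q : ℕ) (φ : QF a) (hdeg : φ.DegLe q)
    (C : List (Fin a → Fin n)) :
    (∃ v : Fin n → ℤ, ∀ σ ∈ C, φ.eval (v ∘ σ)) ↔
    (∃ v : Fin n → ℤ, (∀ i, 1 ≤ v i ∧ v i ≤ ((q + 1) * n : ℕ)) ∧
      ∀ σ ∈ C, φ.eval (v ∘ σ)) := by
  constructor
  · rintro ⟨v, hv⟩
    refine ⟨GapCompression.compress (q + 1) v, fun i => ⟨GapCompression.one_le_compress i, ?_⟩,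
      fun σ hσ => (QF.eval_iff_of_le_add_iff hdeg fun i j m hm hm' => ?_).mpr (hv σ hσ)⟩
    · simpa using GapCompression.compress_le_mul_card (v := v) q.succ_pos i
    · exact GapCompression.compress_le_compress_add_iff (by push_cast; omega) (by push_cast; omega)
  · rintro ⟨v, -, hv⟩
    exact ⟨v, hv⟩
end

section
/- Fix d ≥ 1 and let R_d ⊆ ℤ³ be the set of all triples of the form (a+d, a, a), (a+d, a+d, a), or (a, a+d, a) for a ∈ ℤ. Then R_d is preserved by the d-modular max operation max_d, but for every positive integer d' ≠ d, R_d is not preserved by max_{d'}. -/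
/-- The `d`-modular max: `max x y` if `x ≡ y (mod d)`, and `x` otherwise. -/
def maxd (d x y : ℤ) : ℤ := if x % d = y % d then max x y else x

/-- The ternary relation consisting of the triples `(a+d,a,a)`, `(a+d,a+d,a)`, `(a,a+d,a)`. -/
def Rd (d : ℤ) : Set (ℤ × ℤ × ℤ) :=
  {t | ∃ a : ℤ, t = (a + d, a, a) ∨ t = (a + d, a + d, a) ∨ t = (a, a + d, a)}

/-!
If the last coordinates of two triples of `R_d` are incongruent mod `d`, so are all their
coordinates, and `max_d` returns the first triple. Otherwise all coordinates are congruent, `max_d`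
is the componentwise maximum, and the last coordinates are either equal or at least `d` apart;
since a triple of `R_d` with last coordinate `a` lies in `[a, a + d]³`, in the second
case one triple dominates the other.
For `d' ≠ d`, `max_{d'}` sends `(d, 0, 0)` and `(d', d + d', d')` outside `R_d`.
-/

def Preserves {α : Type*} (f : α → α → α) (R : Set (α × α × α)) : Prop :=
  ∀ t₁ ∈ R, ∀ t₂ ∈ R, (f t₁.1 t₂.1, f t₁.2.1 t₂.2.1, f t₁.2.2 t₂.2.2) ∈ R

lemma maxd_of_modEq {d x y : ℤ} (h : x ≡ y [ZMOD d]) : maxd d x y = max x y :=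
  if_pos h

lemma maxd_of_not_modEq {d x y : ℤ} (h : ¬x ≡ y [ZMOD d]) : maxd d x y = x :=
  if_neg h

lemma Int.ModEq.eq_or_add_le_or_add_le {d a b : ℤ} (hd : 0 < d) (h : a ≡ b [ZMOD d]) :
    a = b ∨ a + d ≤ b ∨ b + d ≤ a := by
  obtain ⟨k, rfl⟩ := Int.modEq_iff_add_fac.mp h
  rcases lt_trichotomy k 0 with hk | rfl | hk
  · right; right; nlinarith
  · simp
  · right; left; nlinarith

lemma mem_Rd_iff {d x y z : ℤ} :
    (x, y, z) ∈ Rd d ↔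
      (x = z + d ∧ y = z) ∨ (x = z + d ∧ y = z + d) ∨ (x = z ∧ y = z + d) := by
  constructor
  · rintro ⟨a, h | h | h⟩ <;> simp only [Prod.mk.injEq] at h <;> omega
  · intro h
    exact ⟨z, by simp only [Prod.mk.injEq, and_true]; omega⟩

lemma modEq_of_mem_Rd {d : ℤ} {t : ℤ × ℤ × ℤ} (ht : t ∈ Rd d) :
    t.1 ≡ t.2.2 [ZMOD d] ∧ t.2.1 ≡ t.2.2 [ZMOD d] := by
  obtain ⟨a, rfl | rfl | rfl⟩ := ht <;> exact ⟨by simp [Int.ModEq], by simp [Int.ModEq]⟩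

lemma max_mem_Rd {d : ℤ} (hd : 0 < d) {t₁ t₂ : ℤ × ℤ × ℤ} (h₁ : t₁ ∈ Rd d) (h₂ : t₂ ∈ Rd d)
    (hz : t₁.2.2 ≡ t₂.2.2 [ZMOD d]) :
    (max t₁.1 t₂.1, max t₁.2.1 t₂.2.1, max t₁.2.2 t₂.2.2) ∈ Rd d := by
  obtain ⟨x₁, y₁, z₁⟩ := t₁
  obtain ⟨x₂, y₂, z₂⟩ := t₂
  dsimp only at hz ⊢
  rw [mem_Rd_iff] at h₁ h₂ ⊢
  have := hz.eq_or_add_le_or_add_le hd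
  omega

theorem maxd_preserves_Rd {d : ℤ} (hd : 0 < d) : Preserves (maxd d) (Rd d) := by
  intro t₁ h₁ t₂ h₂
  obtain ⟨hx₁, hy₁⟩ := modEq_of_mem_Rd h₁
  obtain ⟨hx₂, hy₂⟩ := modEq_of_mem_Rd h₂
  have transfer {u₁ u₂ : ℤ} (hu₁ : u₁ ≡ t₁.2.2 [ZMOD d]) (hu₂ : u₂ ≡ t₂.2.2 [ZMOD d]) :
      u₁ ≡ u₂ [ZMOD d] ↔ t₁.2.2 ≡ t₂.2.2 [ZMOD d] :=
    ⟨fun h => (hu₁.symm.trans h).trans hu₂, fun h => (hu₁.trans h).trans hu₂.symm⟩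
  by_cases hz : t₁.2.2 ≡ t₂.2.2 [ZMOD d]
  · rw [maxd_of_modEq ((transfer hx₁ hx₂).mpr hz), maxd_of_modEq ((transfer hy₁ hy₂).mpr hz),
      maxd_of_modEq hz]
    exact max_mem_Rd hd h₁ h₂ hz
  · rw [maxd_of_not_modEq (mt (transfer hx₁ hx₂).mp hz),
      maxd_of_not_modEq (mt (transfer hy₁ hy₂).mp hz), maxd_of_not_modEq hz]
    exact h₁

lemma maxd_witness_not_mem_Rd {d d' : ℤ} (hd : 0 < d) (hd' : 0 < d') (hne : d' ≠ d) :
    (maxd d' d d', maxd d' 0 (d + d'), maxd d' 0 d') ∉ Rd d := by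
  have hx : d ≡ d' [ZMOD d'] ↔ d' ∣ d := by simp [Int.modEq_iff_dvd]
  have hy : 0 ≡ d + d' [ZMOD d'] ↔ d' ∣ d := by simp [Int.modEq_iff_dvd]
  rw [maxd_of_modEq (by simp [Int.ModEq] : 0 ≡ d' [ZMOD d']), mem_Rd_iff]
  by_cases hdvd : d' ∣ d
  · have := Int.le_of_dvd hd hdvd
    rw [maxd_of_modEq (hx.mpr hdvd), maxd_of_modEq (hy.mpr hdvd)]
    omega
  · rw [maxd_of_not_modEq (mt hx.mp hdvd), maxd_of_not_modEq (mt hy.mp hdvd)]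
    omega

theorem stmt_8 (d : ℤ) (hd : 1 ≤ d) :
    (∀ t₁ ∈ Rd d, ∀ t₂ ∈ Rd d,
      (maxd d t₁.1 t₂.1, maxd d t₁.2.1 t₂.2.1, maxd d t₁.2.2 t₂.2.2) ∈ Rd d) ∧
    (∀ d' : ℤ, 0 < d' → d' ≠ d →
      ∃ t₁ ∈ Rd d, ∃ t₂ ∈ Rd d,
        (maxd d' t₁.1 t₂.1, maxd d' t₁.2.1 t₂.2.1, maxd d' t₁.2.2 t₂.2.2) ∉ Rd d) := by
  refine ⟨maxd_preserves_Rd hd, fun d' hd' hne => ⟨(d, 0, 0), ?_, (d', d + d', d'), ?_,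
    maxd_witness_not_mem_Rd hd hd' hne⟩⟩
  · exact mem_Rd_iff.mpr (by omega)
  · exact mem_Rd_iff.mpr (by omega)
end

section
/- Let q ∈ ℕ, and suppose φ(x₁,...,x_n) is a quantifier-free formula over (ℤ;<) whose atoms are x_i < x_j + k or x_i ≤ x_j + k with |k| ≤ q. Let f, g : {1,...,n} → ℤ be two assignments such that: (i) for all i, j, the pair (i,j) is (f,q)-connected iff it is (g,q)-connected; (ii) if (i,j) is (f,q)-connected then f(i) - f(j) = g(i) - g(j); (iii) if (i,j) is not (f,q)-connected then f(i) < f(j) ⟺ g(i) < g(j). Then f satisfies φ if and only if g satisfies φ. -/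
/-- `i` and `j` are `(f,s)`-connected: there is a chain of indices from `i` to `j` along
which consecutive `f`-values differ by at most `s`. -/
def Conn {n : ℕ} (f : Fin n → ℤ) (s : ℕ) (i j : Fin n) : Prop :=
  ∃ (k : ℕ) (u : ℕ → Fin n), u 0 = i ∧ u k = j ∧
    ∀ t < k, |f (u (t + 1)) - f (u t)| ≤ (s : ℤ)

/-- Substitution lemma (finite version): satisfaction of a degree-`q` formula depends only
on the `∼_q`-equivalence class of the assignment. -/
theorem stmt_11 (n q : ℕ) (φ : QF n) (hdeg : φ.DegLe q)
    (f g : Fin n → ℤ)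
    (h1 : ∀ i j, Conn f q i j ↔ Conn g q i j)
    (h2 : ∀ i j, Conn f q i j → f i - f j = g i - g j)
    (h3 : ∀ i j, ¬ Conn f q i j → (f i < f j ↔ g i < g j)) :
    φ.eval f ↔ φ.eval g := by
  have key : ∀ (h : Fin n → ℤ) (i j : Fin n), ¬ Conn h q i j → (q : ℤ) < |h i - h j| := by
    intro h i j hc
    by_contra hle
    exact hc ⟨1, fun t => if t = 0 then i else j, by simp, by simp,
      fun t ht => by interval_cases t; simpa [abs_sub_comm] using not_lt.mp hle⟩
  induction φ with
  | lt i j k =>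
    simp only [QF.eval]
    by_cases hc : Conn f q i j
    · have := h2 i j hc; omega
    · have hf := key f i j hc
      have hg := key g i j ((h1 i j).not.mp hc)
      have h3' := h3 i j hc
      simp only [QF.DegLe] at hdeg
      rw [abs_le] at hdeg
      rw [lt_abs] at hf hg
      rcases hf with hf | hf <;> rcases hg with hg | hg <;>
        constructor <;> intro h <;> omega
  | le i j k =>
    simp only [QF.eval]
    by_cases hc : Conn f q i j
    · have := h2 i j hc; omega
    · have hf := key f i j hc
      have hg := key g i j ((h1 i j).not.mp hc)
      have h3' := h3 i j hc
      simp only [QF.DegLe] at hdeg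
      rw [abs_le] at hdeg
      rw [lt_abs] at hf hg
      rcases hf with hf | hf <;> rcases hg with hg | hg <;>
        constructor <;> intro h <;> omega
  | and φ ψ ihφ ihψ =>
    simp only [QF.eval]; exact and_congr (ihφ hdeg.1) (ihψ hdeg.2)
  | or φ ψ ihφ ihψ =>
    simp only [QF.eval]; exact or_congr (ihφ hdeg.1) (ihψ hdeg.2)
  | not φ ihφ =>
    simp only [QF.eval]; exact not_congr (ihφ hdeg)
end

section
/- Let Φ be a satisfiable finite set of constraints of the form y = x + p over variables V (with solutions over ℤ), and let x, y ∈ V, p ∈ ℤ. Then every solution of Φ satisfies y = x + p if and only if there is an (undirected) path from x to y in the constraint graph whose algebraic weight equals p, or x = y and p = 0. -/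
/-- Undirected weighted walks in the constraint graph of a set `Φ` of constraints
`suc^p(x,y)` (i.e. `y = x + p`), where an arc may be traversed backwards with negated
weight. -/
inductive Walk {V : Type} (Φ : List (V × V × ℤ)) : V → V → ℤ → Prop
  | refl (x : V) : Walk Φ x x 0
  | step {x y z : V} {p w : ℤ} :
      ((x, y, p) ∈ Φ ∨ (y, x, -p) ∈ Φ) → Walk Φ y z w → Walk Φ x z (p + w)

lemma walk_sound {V : Type} {Φ : List (V × V × ℤ)} {x y : V} {w : ℤ}
    (hw : Walk Φ x y w) (s : V → ℤ) (hs : ∀ c ∈ Φ, s c.2.1 = s c.1 + c.2.2) :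
    s y = s x + w := by
  induction hw with
  | refl x => simp
  | step h _ ih =>
    rcases h with h | h
    · have := hs _ h; simp at this; omega
    · have := hs _ h; simp at this; omega

lemma walk_trans {V : Type} {Φ : List (V × V × ℤ)} {x y z : V} {w w' : ℤ}
    (h1 : Walk Φ x y w) (h2 : Walk Φ y z w') : Walk Φ x z (w + w') := by
  induction h1 with
  | refl x => simpa using h2
  | step h _ ih => rw [add_assoc]; exact Walk.step h (ih h2)

theorem stmt_16 {V : Type} (Φ : List (V × V × ℤ))
    (hsat : ∃ s : V → ℤ, ∀ c ∈ Φ, s c.2.1 = s c.1 + c.2.2)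
    (x y : V) (p : ℤ) :
    (∀ s : V → ℤ, (∀ c ∈ Φ, s c.2.1 = s c.1 + c.2.2) → s y = s x + p) ↔
    (Walk Φ x y p ∨ (x = y ∧ p = 0)) := by
  classical
  constructor
  · intro h
    obtain ⟨s, hs⟩ := hsat
    by_cases hc : ∃ w, Walk Φ x y w
    · obtain ⟨w, hw⟩ := hc
      have h1 := walk_sound hw s hs
      have h2 := h s hs
      have : w = p := by omega
      exact Or.inl (this ▸ hw)
    · exfalso
      set s' : V → ℤ := fun v => if ∃ w, Walk Φ x v w then s v else s v + 1 with hs'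
      have hsol : ∀ c ∈ Φ, s' c.2.1 = s' c.1 + c.2.2 := by
        rintro ⟨a, b, k⟩ hcm
        have hab : (∃ w, Walk Φ x a w) ↔ (∃ w, Walk Φ x b w) := by
          constructor
          · rintro ⟨w, hw⟩
            exact ⟨w + (k + 0), walk_trans hw (Walk.step (Or.inl hcm) (Walk.refl _))⟩
          · rintro ⟨w, hw⟩
            refine ⟨w + (-k + 0), walk_trans hw (Walk.step (Or.inr ?_) (Walk.refl _))⟩
            simpa using hcm
        have heq := hs _ hcm
        simp only at heq
        show (if ∃ w, Walk Φ x b w then s b else s b + 1) =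
          (if ∃ w, Walk Φ x a w then s a else s a + 1) + k
        by_cases ha : ∃ w, Walk Φ x a w
        · rw [if_pos ha, if_pos (hab.mp ha)]; exact heq
        · rw [if_neg ha, if_neg (fun hb => ha (hab.mpr hb))]; omega
      have h1 := h s hs
      have h2 := h s' hsol
      have hxw : ∃ w, Walk Φ x x w := ⟨0, Walk.refl x⟩
      have hx : s' x = s x := by simp [hs', hxw]
      have hy : s' y = s y + 1 := by simp [hs', hc]
      omega
  · rintro (hw | ⟨rfl, rfl⟩)
    · intro s hs; exact walk_sound hw s hs
    · intro s hs; simp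
end

section
/- Let S ⊂ ℤ be finite with |S| ≥ 2, let d = gcd{a - a' : a, a' ∈ S}, and let Diff_S = {(x,y) ∈ ℤ² : y - x ∈ S}. Then for any a ≤ b with d dividing b - a, the relation Diff_T with T = {a, a+d, a+2d, ..., b} (a d-progression) is primitively positively definable from suc and Diff_S over ℤ: there is a formula built from existential quantification, conjunction, the relation y = x + 1, and Diff_S that defines Diff_T. -/
/-- Primitive positive formulas over the signature `{suc, Diff_S, =}`, where the semantics
of the `Diff` atom is given by a set `S` supplied to `eval`. -/
inductive PP : ℕ → Type
  | suc {n} (i j : Fin n) : PP n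
  | diff {n} (i j : Fin n) : PP n
  | eq {n} (i j : Fin n) : PP n
  | and {n} (φ ψ : PP n) : PP n
  | ex {n} (φ : PP (n + 1)) : PP n

def PP.eval (S : Set ℤ) : {n : ℕ} → PP n → (Fin n → ℤ) → Prop
  | _, .suc i j, v => v j = v i + 1
  | _, .diff i j, v => v j - v i ∈ S
  | _, .eq i j, v => v i = v j
  | _, .and φ ψ, v => PP.eval S φ v ∧ PP.eval S ψ v
  | _, .ex φ, v => ∃ z : ℤ, PP.eval S φ (Fin.cons z v)

/-!
Call `R ⊆ ℤ` definable when `Diff_R` is pp-definable from `suc` and `Diff_S`. Definable sets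
contain `S` and every singleton, and are closed under intersection, negation and sumsets.

Translating `S` by its minimum gives a definable `A` of nonnegative multiples of `d` with
`0 ∈ A`, generating `dℤ` as a group. Then `d = P - Q` with `P, Q` in the monoid generated by
`A`, and writing `Q = q d` shows that this monoid contains `s d` for all `s ≥ q²`; let `m` be
the least such threshold, so that `(m - 1) d` is a gap. A large sumset `C = k A` contains every
multiple of `d` in `[m d, 2 m d + (b - a)]`. The points `x` with `x, x - d, …, x - m d ∈ C`
cannot straddle the gap, so they are multiples of `d` that are at least `2 m d`, and they
include all multiples of `d` in `[2 m d, 2 m d + (b - a)]`. Intersecting this definable set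
with its reflection cuts out exactly that window, a translate of `{a, a + d, …, b}`.
-/

open Pointwise

namespace PP

def rename : {n m : ℕ} → (Fin n → Fin m) → PP n → PP m
  | _, _, f, .suc i j => .suc (f i) (f j)
  | _, _, f, .diff i j => .diff (f i) (f j)
  | _, _, f, .eq i j => .eq (f i) (f j)
  | _, _, f, .and φ ψ => .and (rename f φ) (rename f ψ)
  | _, _, f, .ex φ => .ex (rename (Fin.cons 0 (Fin.succ ∘ f)) φ)

theorem eval_rename (S : Set ℤ) {n m : ℕ} (f : Fin n → Fin m) (φ : PP n) (v : Fin m → ℤ) :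
    (φ.rename f).eval S v ↔ φ.eval S (v ∘ f) := by
  induction φ generalizing m with
  | suc | diff | eq => rfl
  | and φ ψ ihφ ihψ => exact and_congr (ihφ f v) (ihψ f v)
  | ex φ ih =>
    refine exists_congr fun z => ?_
    rw [ih]
    congr! 1
    funext i
    exact Fin.cases rfl (fun _ => rfl) i

end PP

def DiffDefinable (S R : Set ℤ) : Prop :=
  ∃ φ : PP 2, ∀ x y : ℤ, PP.eval S φ ![x, y] ↔ y - x ∈ R

theorem diffDefinable_self (S : Set ℤ) : DiffDefinable S S :=
  ⟨.diff 0 1, fun _ _ => Iff.rfl⟩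

theorem diffDefinable_zero (S : Set ℤ) : DiffDefinable S {0} :=
  ⟨.eq 0 1, fun x y => by simp [PP.eval, sub_eq_zero, eq_comm]⟩

theorem diffDefinable_one (S : Set ℤ) : DiffDefinable S {1} :=
  ⟨.suc 0 1, fun x y => by simp [PP.eval, sub_eq_iff_eq_add']⟩

namespace DiffDefinable

variable {S R R' : Set ℤ}

theorem inter (h : DiffDefinable S R) (h' : DiffDefinable S R') : DiffDefinable S (R ∩ R') := by
  obtain ⟨φ, hφ⟩ := h
  obtain ⟨ψ, hψ⟩ := h'
  exact ⟨.and φ ψ, fun x y => and_congr (hφ x y) (hψ x y)⟩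

theorem neg (h : DiffDefinable S R) : DiffDefinable S (-R) := by
  obtain ⟨φ, hφ⟩ := h
  refine ⟨φ.rename ![1, 0], fun x y => ?_⟩
  have hswap : ![x, y] ∘ ![1, 0] = ![y, x] := by
    funext i
    fin_cases i <;> rfl
  rw [PP.eval_rename, hswap, hφ, Set.mem_neg, neg_sub]

theorem add (h : DiffDefinable S R) (h' : DiffDefinable S R') : DiffDefinable S (R + R') := by
  obtain ⟨φ, hφ⟩ := h
  obtain ⟨ψ, hψ⟩ := h'
  refine ⟨.ex (.and (φ.rename ![1, 0]) (ψ.rename ![0, 2])), fun x y => ?_⟩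
  have hleft : ∀ z, (Fin.cons z ![x, y] : Fin 3 → ℤ) ∘ ![1, 0] = ![x, z] := by
    intro z
    funext i
    fin_cases i <;> rfl
  have hright : ∀ z, (Fin.cons z ![x, y] : Fin 3 → ℤ) ∘ ![0, 2] = ![z, y] := by
    intro z
    funext i
    fin_cases i <;> rfl
  simp only [PP.eval, PP.eval_rename, hleft, hright, hφ, hψ, Set.mem_add]
  constructor
  · rintro ⟨z, hz, hz'⟩
    exact ⟨z - x, hz, y - z, hz', by ring⟩
  · rintro ⟨r, hr, r', hr', hsum⟩
    refine ⟨x + r, by simpa using hr, ?_⟩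
    rwa [show y - (x + r) = r' by linarith]

theorem nsmul (h : DiffDefinable S R) : ∀ n : ℕ, DiffDefinable S (n • R)
  | 0 => by simpa [Set.singleton_zero] using diffDefinable_zero S
  | n + 1 => by
    rw [succ_nsmul]
    exact (h.nsmul n).add h

theorem _root_.diffDefinable_singleton (S : Set ℤ) (c : ℤ) : DiffDefinable S {c} := by
  induction c using Int.induction_on with
  | zero => exact diffDefinable_zero S
  | succ i ih => simpa [Set.singleton_add_singleton] using ih.add (diffDefinable_one S)
  | pred i ih =>
    simpa [Set.singleton_add_singleton, sub_eq_add_neg] using ih.add (diffDefinable_one S).neg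

theorem translate (h : DiffDefinable S R) (c : ℤ) : DiffDefinable S {x | x + c ∈ R} := by
  convert h.add (diffDefinable_singleton S (-c)) using 1
  ext x
  simp [Set.add_singleton, Set.image_add_right]

theorem reflect (h : DiffDefinable S R) (c : ℤ) : DiffDefinable S {x | c - x ∈ R} := by
  convert h.neg.translate (-c) using 1
  ext x
  simp [sub_eq_add_neg]

end DiffDefinable

theorem AddSubgroup.exists_sub_of_mem_closure {G : Type*} [AddCommGroup G] {A : Set G} {x : G}
    (hx : x ∈ AddSubgroup.closure A) :
    ∃ P ∈ AddSubmonoid.closure A, ∃ Q ∈ AddSubmonoid.closure A, x = P - Q := by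
  induction hx using AddSubgroup.closure_induction with
  | mem x hx => exact ⟨x, AddSubmonoid.subset_closure hx, 0, zero_mem _, (sub_zero x).symm⟩
  | zero => exact ⟨0, zero_mem _, 0, zero_mem _, (sub_zero 0).symm⟩
  | add x y _ _ hx hy =>
    obtain ⟨P, hP, Q, hQ, rfl⟩ := hx
    obtain ⟨P', hP', Q', hQ', rfl⟩ := hy
    exact ⟨P + P', add_mem hP hP', Q + Q', add_mem hQ hQ', by abel⟩
  | neg x _ hx =>
    obtain ⟨P, hP, Q, hQ, rfl⟩ := hx
    exact ⟨Q, hQ, P, hP, neg_sub P Q⟩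

theorem AddSubmonoid.nsmul_mem_of_sq_le {M : Type*} [AddMonoid M] {N : AddSubmonoid M} {x : M}
    {q s : ℕ} (hq : q • x ∈ N) (hq' : (q + 1) • x ∈ N) (hs : q * q ≤ s) : s • x ∈ N := by
  -- with `s = c q + r`, `r < q ≤ c`, we get `s = (c - r) q + r (q + 1)`
  have hsplit : s = (s / q - s % q) * q + s % q * (q + 1) := by
    rcases Nat.eq_zero_or_pos q with rfl | hq
    · simp
    · have hdiv := Nat.div_add_mod s q
      have hrc : s % q ≤ s / q := (Nat.mod_lt s hq).le.trans ((Nat.le_div_iff_mul_le hq).2 hs)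
      zify [hrc] at hdiv ⊢
      linear_combination -hdiv
  rw [hsplit, add_nsmul, mul_nsmul', mul_nsmul']
  exact add_mem (nsmul_mem hq _) (nsmul_mem hq' _)

theorem AddSubmonoid.exists_mem_nsmul_of_mem_closure {M : Type*} [AddMonoid M] {A : Set M}
    {x : M} (hx : x ∈ AddSubmonoid.closure A) : ∃ n : ℕ, x ∈ n • A := by
  induction hx using AddSubmonoid.closure_induction with
  | mem x hx => exact ⟨1, by simpa using hx⟩
  | zero => exact ⟨0, by simp⟩
  | add x y _ _ hx hy =>
    obtain ⟨m, hm⟩ := hx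
    obtain ⟨n, hn⟩ := hy
    exact ⟨m + n, by rw [add_nsmul]; exact Set.add_mem_add hm hn⟩

theorem AddSubmonoid.exists_subset_nsmul_of_finite {M : Type*} [AddMonoid M] {A F : Set M}
    (h0 : 0 ∈ A) (hF : F.Finite) (hFA : F ⊆ AddSubmonoid.closure A) : ∃ n : ℕ, F ⊆ n • A := by
  have hmono : Monotone fun n : ℕ => n • A := fun _ _ => Set.nsmul_subset_nsmul_right h0
  have hcover : (hF.toFinset : Set M) ⊆ ⋃ n : ℕ, n • A := by
    intro x hx
    exact Set.mem_iUnion.2 (exists_mem_nsmul_of_mem_closure (hFA (by simpa using hx)))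
  simpa using hmono.directed_le.exists_mem_subset_of_finset_subset_biUnion hcover

theorem Int.mem_addSubgroupClosure_of_forall_dvd {A : Set ℤ} {d : ℤ}
    (h : ∀ g : ℤ, (∀ x ∈ A, g ∣ x) → g ∣ d) : d ∈ AddSubgroup.closure A := by
  obtain ⟨g, hg⟩ := Int.subgroup_cyclic (AddSubgroup.closure A)
  rw [← AddSubgroup.zmultiples_eq_closure] at hg
  rw [hg, Int.mem_zmultiples_iff]
  refine h g fun x hx => ?_
  rw [← Int.mem_zmultiples_iff, ← hg]
  exact AddSubgroup.subset_closure hx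

theorem nonneg_and_dvd_of_mem_closure {A : Set ℤ} {d : ℤ} (hA : ∀ x ∈ A, 0 ≤ x ∧ d ∣ x) :
    ∀ x ∈ AddSubmonoid.closure A, 0 ≤ x ∧ d ∣ x := by
  intro x hx
  induction hx using AddSubmonoid.closure_induction with
  | mem x hx => exact hA x hx
  | zero => exact ⟨le_rfl, dvd_zero d⟩
  | add x y _ _ hx hy => exact ⟨add_nonneg hx.1 hy.1, dvd_add hx.2 hy.2⟩

theorem exists_forall_ge_mul_mem_closure {A : Set ℤ} {d : ℤ} (hd : 0 < d)
    (hA : ∀ x ∈ A, 0 ≤ x ∧ d ∣ x) (hgen : d ∈ AddSubgroup.closure A) :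
    ∃ t : ℕ, ∀ s ≥ t, (s : ℤ) * d ∈ AddSubmonoid.closure A := by
  obtain ⟨P, hP, Q, hQ, hPQ⟩ := AddSubgroup.exists_sub_of_mem_closure hgen
  obtain ⟨hQ0, q, rfl⟩ := nonneg_and_dvd_of_mem_closure hA Q hQ
  lift q to ℕ using (mul_nonneg_iff_of_pos_left hd).1 hQ0
  refine ⟨q * q, fun s hs => ?_⟩
  have hq : q • d ∈ AddSubmonoid.closure A := by rwa [nsmul_eq_mul, mul_comm]
  have hq' : (q + 1) • d ∈ AddSubmonoid.closure A := by
    rwa [nsmul_eq_mul, show ((q + 1 : ℕ) : ℤ) * d = P by push_cast; linarith]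
  simpa using AddSubmonoid.nsmul_mem_of_sq_le hq hq' hs

-- the paper's `[a, b | d]`
def progression (a b d : ℤ) : Set ℤ := {x | a ≤ x ∧ x ≤ b ∧ d ∣ x - a}

theorem progression_finite (a b d : ℤ) : (progression a b d).Finite :=
  (Set.finite_Icc a b).subset fun _ hx => ⟨hx.1, hx.2.1⟩

theorem setOf_add_mem_progression (a b c d : ℤ) :
    {x | x + c ∈ progression a b d} = progression (a - c) (b - c) d := by
  ext x
  simp only [progression, Set.mem_ofPred_eq, sub_sub_eq_add_sub, sub_le_iff_le_add,
    le_sub_iff_add_le]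

theorem inter_setOf_reflect_eq_progression {X : Set ℤ} {L W d : ℤ}
    (hX : ∀ x ∈ X, L ≤ x ∧ d ∣ x - L) (hP : progression L (L + W) d ⊆ X) (hW : d ∣ W) :
    X ∩ {x | 2 * L + W - x ∈ X} = progression L (L + W) d := by
  ext x
  constructor
  · rintro ⟨hx, hx'⟩
    exact ⟨(hX x hx).1, by linarith [(hX _ hx').1], (hX x hx).2⟩
  · rintro ⟨hLx, hxW, hdx⟩
    refine ⟨hP ⟨hLx, hxW, hdx⟩, hP ⟨by linarith, by linarith, ?_⟩⟩
    rw [show 2 * L + W - x - L = W - (x - L) by ring]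
    exact dvd_sub hW hdx

def runEnds (C : Set ℤ) (d : ℤ) (m : ℕ) : Set ℤ := {x | ∀ j ≤ m, x - j * d ∈ C}

theorem DiffDefinable.runEnds {S C : Set ℤ} (h : DiffDefinable S C) (d : ℤ) :
    ∀ m : ℕ, DiffDefinable S (runEnds C d m)
  | 0 => by
    convert h
    ext x
    simp [_root_.runEnds]
  | m + 1 => by
    convert (h.runEnds d m).inter (h.translate (-((m + 1 : ℕ) * d))) using 1
    ext x
    simp only [_root_.runEnds, Set.mem_ofPred_eq, Set.mem_inter_iff, Nat.le_succ_iff, or_imp,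
      forall_and, forall_eq, ← sub_eq_add_neg]

theorem runEnds_subset {C : Set ℤ} {d : ℤ} {m : ℕ} (hd : 0 < d)
    (hC : ∀ x ∈ C, 0 ≤ x ∧ d ∣ x) (hgap : 0 < m → ((m : ℤ) - 1) * d ∉ C) :
    ∀ x ∈ runEnds C d m, 2 * m * d ≤ x ∧ d ∣ x - 2 * m * d := by
  intro x hx
  obtain ⟨-, n, rfl⟩ := hC x (by simpa using hx 0 (Nat.zero_le m))
  refine ⟨?_, Dvd.intro (n - 2 * m) (by ring)⟩
  have hmn : (m : ℤ) ≤ n := by nlinarith [(hC _ (hx m le_rfl)).1]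
  by_contra hlt
  have hn : n < 2 * m := by nlinarith
  -- otherwise the run `x, x - d, …, x - m d` passes through the gap `(m - 1) d`
  obtain ⟨j, hj⟩ : ∃ j : ℕ, (j : ℤ) = n - m + 1 :=
    ⟨(n - m + 1).toNat, Int.toNat_of_nonneg (by omega)⟩
  refine hgap (by omega) ?_
  convert hx j (by omega) using 1
  rw [hj]
  ring

theorem progression_subset_runEnds {C : Set ℤ} {d W : ℤ} {m : ℕ} (hd : 0 ≤ d)
    (hC : progression (m * d) (2 * m * d + W) d ⊆ C) :
    progression (2 * m * d) (2 * m * d + W) d ⊆ runEnds C d m := by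
  rintro x ⟨h1, h2, h3⟩ j hj
  have hjm : (j : ℤ) * d ≤ m * d := mul_le_mul_of_nonneg_right (by exact_mod_cast hj) hd
  have hj0 : 0 ≤ (j : ℤ) * d := by positivity
  refine hC ⟨by linarith, by linarith, ?_⟩
  rw [show x - j * d - m * d = x - 2 * m * d + (m - j) * d by ring]
  exact dvd_add h3 (dvd_mul_left d _)

theorem DiffDefinable.progression_of_mem_closure {S A : Set ℤ} {d : ℤ} (hA : DiffDefinable S A)
    (hd : 0 < d) (h0 : 0 ∈ A) (hAd : ∀ x ∈ A, 0 ≤ x ∧ d ∣ x)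
    (hgen : d ∈ AddSubgroup.closure A) (a b : ℤ) (hdiv : d ∣ b - a) :
    DiffDefinable S (progression a b d) := by
  classical
  have hsem := exists_forall_ge_mul_mem_closure hd hAd hgen
  set m := Nat.find hsem
  have hgap : 0 < m → ((m : ℤ) - 1) * d ∉ AddSubmonoid.closure A := by
    intro hm hmem
    refine Nat.find_min hsem (Nat.sub_one_lt hm.ne') fun s hs => ?_
    rcases hs.eq_or_lt with rfl | hlt
    · rwa [Nat.cast_pred hm]
    · exact Nat.find_spec hsem s (by omega)
  have hfull : progression (m * d) (2 * m * d + (b - a)) d ⊆ AddSubmonoid.closure A := by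
    rintro x ⟨h1, -, e, he⟩
    lift e to ℕ using by nlinarith
    rw [show x = ((m + e : ℕ) : ℤ) * d by push_cast; linear_combination he]
    exact Nat.find_spec hsem (m + e) (Nat.le_add_right m e)
  obtain ⟨k, hk⟩ :=
    AddSubmonoid.exists_subset_nsmul_of_finite h0 (progression_finite _ _ d) hfull
  have hkA : k • A ⊆ AddSubmonoid.closure A := AddSubmonoid.nsmul_subset AddSubmonoid.subset_closure
  have hZ := (hA.nsmul k).runEnds d m
  have hwindow := inter_setOf_reflect_eq_progression
    (runEnds_subset hd (fun x hx => nonneg_and_dvd_of_mem_closure hAd x (hkA hx))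
      fun hm h => hgap hm (hkA h))
    (progression_subset_runEnds hd.le hk) hdiv
  have hP := (hwindow ▸ hZ.inter (hZ.reflect _)).translate (2 * m * d - a)
  rw [setOf_add_mem_progression] at hP
  convert hP using 2 <;> ring

theorem stmt_19_general (S : Finset ℤ) (hS : 2 ≤ S.card) (d : ℤ)
    (hd0 : 0 < d)
    (hdvd : ∀ a ∈ S, ∀ a' ∈ S, d ∣ (a - a'))
    (hgcd : ∀ d' : ℤ, (∀ a ∈ S, ∀ a' ∈ S, d' ∣ (a - a')) → d' ∣ d)
    (a b : ℤ) (hdiv : d ∣ (b - a)) :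
    ∃ φ : PP 2, ∀ x y : ℤ,
      PP.eval (↑S : Set ℤ) φ ![x, y] ↔
        (a ≤ y - x ∧ y - x ≤ b ∧ d ∣ (y - x - a)) := by
  have hne : S.Nonempty := Finset.card_pos.mp (by omega)
  set M := S.min' hne
  have hMS : M ∈ S := S.min'_mem hne
  have hgen : d ∈ AddSubgroup.closure {x | x + M ∈ (S : Set ℤ)} := by
    refine Int.mem_addSubgroupClosure_of_forall_dvd fun g hg => hgcd g fun x hx y hy => ?_
    simpa using dvd_sub (hg (x - M) (by simpa using hx)) (hg (y - M) (by simpa using hy))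
  exact ((diffDefinable_self _).translate M).progression_of_mem_closure hd0
    (by simpa using hMS)
    (fun x hx => ⟨by linarith [S.min'_le _ hx], by simpa using hdvd _ hx M hMS⟩) hgen a b hdiv

/-- Lemma on generated progressions: if `d` is the gcd of all differences of elements of a
finite set `S` with at least two elements, then for any `d`-progression
`T = {a, a+d, …, b}` the relation `Diff_T` is pp-definable from `suc` and `Diff_S`. -/
theorem stmt_19 (S : Finset ℤ) (hS : 2 ≤ S.card) (d : ℤ)
    (hd0 : 0 < d)
    (hdvd : ∀ a ∈ S, ∀ a' ∈ S, d ∣ (a - a'))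
    (hgcd : ∀ d' : ℤ, (∀ a ∈ S, ∀ a' ∈ S, d' ∣ (a - a')) → d' ∣ d)
    (a b : ℤ) (hab : a ≤ b) (hdiv : d ∣ (b - a)) :
    ∃ φ : PP 2, ∀ x y : ℤ,
      PP.eval (↑S : Set ℤ) φ ![x, y] ↔
        (a ≤ y - x ∧ y - x ≤ b ∧ d ∣ (y - x - a)) :=
  stmt_19_general S hS d hd0 hdvd hgcd a b hdiv
end
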